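/- For the LUE (Laguerre Unitary Ensemble) with parameter α, the one-point correlator ⟨tr X^ℓ⟩ := (1/Z_N) ∫_{H_N^+} tr(X^ℓ) det(X)^α exp(-tr X) dX equals A_ℓ(N, N+α) for all ℓ ≥ 1, where A_ℓ(N,M) := (1/ℓ) ∑_{j=0}^{ℓ-1} (-1)^j (N-j)_ℓ (M-j)_ℓ / (j!(ℓ-1-j)!). Equivalently, in terms of monic generalized Laguerre polynomials: ∑_{n=0}^{N-1} (1/h_n) ∫_0^∞ x^{ℓ+α} e^{-x} (π_n^{(α)}(x))² dx = A_ℓ(N, N+α), where h_n = n! Γ(α+n+1). -/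

import Mathlib

/-!
Expanding one factor `π_n` in monomials reduces the `n`-th term to the moments
`∫ x^(b+α) e^(-x) π_n(x) dx`. In the monomial basis such a moment is `Γ(α+n+1)` times the
`n`-th forward difference of `y ↦ (y)_b` at `α+1`, hence equals `n! C(b,n) Γ(α+b+1)`.
The normalized `n`-th term becomes `∑_i (-1)^i C(n,i) C(n+ℓ-i,n) (n+α-i+1)_ℓ`; after the symmetry
`C(n,i) C(n+ℓ-i,n) = C(ℓ,i) C(n+ℓ-i,ℓ)` and Pascal's rule this is
`A_ℓ(n+1, n+1+α) - A_ℓ(n, n+α)`, so the sum over `n < N` telescopes from `A_ℓ(0, α) = 0`.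
-/

open Finset MeasureTheory

/-- Rising factorial (Pochhammer symbol) `(x)_n = x(x+1)⋯(x+n-1)`. -/
noncomputable def poch (x : ℝ) (n : ℕ) : ℝ := (ascPochhammer ℝ n).eval x

/-- The LUE coefficients `A_ℓ(N,M)`. -/
noncomputable def A (N M : ℝ) : ℕ → ℝ
  | 0 => N
  | (ℓ + 1) => (1 / ((ℓ : ℝ) + 1)) * ∑ j ∈ range (ℓ + 1),
      (-1 : ℝ) ^ j * poch (N - j) (ℓ + 1) * poch (M - j) (ℓ + 1) /
        ((j.factorial : ℝ) * ((ℓ - j).factorial : ℝ))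

/-- Monic generalized Laguerre polynomial
`π_n^{(α)}(x) = ∑_{j=0}^n (-1)^{n-j} (n-j+1)_j (j+1+α)_{n-j} x^j / j!`. -/
noncomputable def laguerreMonic (α : ℝ) (n : ℕ) (x : ℝ) : ℝ :=
  ∑ j ∈ range (n + 1),
    (-1 : ℝ) ^ (n - j) * poch ((n : ℝ) - j + 1) j * poch ((j : ℝ) + 1 + α) (n - j) * x ^ j /
      (j.factorial : ℝ)

open Nat

lemma poch_succ (x : ℝ) (n : ℕ) : poch x (n + 1) = poch x n * (x + n) :=
  ascPochhammer_succ_eval n x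

lemma poch_succ_left (x : ℝ) (n : ℕ) : poch x (n + 1) = x * poch (x + 1) n := by
  simp [poch, ascPochhammer_succ_left, Polynomial.eval_comp]

lemma poch_neg_natCast_of_lt {k n : ℕ} (h : k < n) : poch (-(k : ℝ)) n = 0 :=
  ascPochhammer_eval_neg_coe_nat_of_lt h

lemma poch_natCast_add_one (m j : ℕ) : poch ((m : ℝ) + 1) j = j ! * (m + j).choose j := by
  rw [poch, ← Nat.cast_succ, ascPochhammer_nat_eq_natCast_ascFactorial,
    Nat.ascFactorial_eq_factorial_mul_choose]
  push_cast; ring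

lemma poch_natCast_sub_add_one {n i ℓ : ℕ} (h : i ≤ ℓ) :
    poch ((n : ℝ) - i + 1) ℓ = ℓ ! * (n + ℓ - i).choose ℓ := by
  rcases le_or_gt i n with hin | hin
  · obtain ⟨m, rfl⟩ := Nat.exists_eq_add_of_le hin
    rw [show ((i + m : ℕ) : ℝ) - i = m by push_cast; ring, poch_natCast_add_one,
      show i + m + ℓ - i = m + ℓ by omega]
  · rw [show (n : ℝ) - i + 1 = -((i - n - 1 : ℕ) : ℝ) by
        rw [Nat.cast_sub (by omega), Nat.cast_sub (by omega)]; push_cast; ring,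
      poch_neg_natCast_of_lt (by omega), Nat.choose_eq_zero_of_lt (by omega)]
    simp

lemma Gamma_add_natCast_eq_poch_mul {x : ℝ} (hx : ∀ k : ℕ, x ≠ -k) (m : ℕ) :
    Real.Gamma (x + m) = poch x m * Real.Gamma x := by
  induction m with
  | zero => simp [poch]
  | succ m ih =>
    have hxm : x + m ≠ 0 := fun h => hx m (by linarith)
    rw [Nat.cast_succ, ← add_assoc, Real.Gamma_add_one hxm, ih, poch_succ]
    ring

lemma fwdDiff_poch_succ (b : ℕ) :
    fwdDiff 1 (fun x => poch x (b + 1)) = fun x => (b + 1 : ℝ) * poch (x + 1) b := by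
  ext x
  rw [fwdDiff, poch_succ (x + 1), poch_succ_left x]
  ring

lemma fwdDiff_iter_poch (n b : ℕ) (y : ℝ) :
    (fwdDiff 1)^[n] (fun x => poch x b) y = b.descFactorial n * poch (y + n) (b - n) := by
  induction n generalizing b y with
  | zero => simp
  | succ n ih =>
    rcases b with _ | b
    · rw [Function.iterate_succ_apply]
      simp [poch, fwdDiff_iter_eq_sum_shift]
    · rw [Function.iterate_succ_apply, fwdDiff_poch_succ,
        show (fun x => (b + 1 : ℝ) * poch (x + 1) b) = (b + 1 : ℝ) • fun x => poch (x + 1) b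
          from rfl,
        fwdDiff_iter_const_smul, Pi.smul_apply, fwdDiff_iter_comp_add 1 (fun x => poch x b) 1 n y,
        ih,
        Nat.succ_descFactorial_succ, Nat.succ_sub_succ, smul_eq_mul]
      push_cast
      ring_nf

lemma sum_alternating_choose_mul_poch (n b : ℕ) (y : ℝ) :
    ∑ k ∈ range (n + 1), (-1 : ℝ) ^ (n - k) * n.choose k * poch (y + k) b
      = b.descFactorial n * poch (y + n) (b - n) := by
  rw [← fwdDiff_iter_poch, fwdDiff_iter_eq_sum_shift]
  refine sum_congr rfl fun k _ => ?_
  simp [zsmul_eq_mul]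

lemma choose_mul_choose_add_sub_eq_zero {n ℓ i : ℕ} (h : ¬(i ≤ n ∧ i ≤ ℓ)) :
    n.choose i * (n + ℓ - i).choose n = 0 := by
  by_cases hn : i ≤ n
  · rw [Nat.choose_eq_zero_of_lt (k := n) (by omega), mul_zero]
  · rw [Nat.choose_eq_zero_of_lt (not_le.mp hn), zero_mul]

-- Both sides are the multinomial coefficient `(n + ℓ - i)! / (i! (n - i)! (ℓ - i)!)`.
lemma choose_mul_choose_add_sub_comm (n ℓ i : ℕ) :
    n.choose i * (n + ℓ - i).choose n = ℓ.choose i * (ℓ + n - i).choose ℓ := by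
  by_cases h : i ≤ n ∧ i ≤ ℓ
  · rw [add_comm ℓ n, mul_comm, Nat.choose_mul h.1, mul_comm (ℓ.choose i), Nat.choose_mul h.2,
      Nat.choose_symm_of_eq_add (show n + ℓ - i - i = (n - i) + (ℓ - i) by omega)]
  · rw [choose_mul_choose_add_sub_eq_zero h,
      choose_mul_choose_add_sub_eq_zero (fun h' => h ⟨h'.2, h'.1⟩)]

lemma sum_choose_mul_choose_add_sub_comm (n ℓ : ℕ) (f : ℕ → ℝ) :
    ∑ i ∈ range (n + 1), ((n.choose i * (n + ℓ - i).choose n : ℕ) : ℝ) * f i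
      = ∑ i ∈ range (ℓ + 1), ((ℓ.choose i * (ℓ + n - i).choose ℓ : ℕ) : ℝ) * f i := by
  have extend : ∀ a b,
      ∑ i ∈ range (a + 1), ((a.choose i * (a + b - i).choose a : ℕ) : ℝ) * f i
        = ∑ i ∈ range (a + b + 1), ((a.choose i * (a + b - i).choose a : ℕ) : ℝ) * f i := by
    intro a b
    refine sum_subset (range_subset_range.mpr (by omega)) fun i _ hi => ?_
    rw [Nat.choose_eq_zero_of_lt (by simpa using hi)]
    simp
  rw [extend, extend, add_comm ℓ n]
  exact sum_congr rfl fun i _ => by rw [choose_mul_choose_add_sub_comm, add_comm n ℓ]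

noncomputable def laguerreCoeff (α : ℝ) (n k : ℕ) : ℝ :=
  (-1) ^ (n - k) * n.choose k * poch (k + 1 + α) (n - k)

lemma laguerreMonic_eq_sum (α : ℝ) (n : ℕ) (x : ℝ) :
    laguerreMonic α n x = ∑ k ∈ range (n + 1), laguerreCoeff α n k * x ^ k := by
  refine sum_congr rfl fun k hk => ?_
  obtain ⟨m, rfl⟩ := Nat.exists_eq_add_of_le' (mem_range_succ_iff.mp hk)
  rw [laguerreCoeff, show ((m + k : ℕ) : ℝ) - k + 1 = m + 1 by push_cast; ring,
    poch_natCast_add_one]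
  field_simp

lemma laguerreCoeff_mul_Gamma {α : ℝ} (hα : -1 < α) {n k : ℕ} (hk : k ≤ n) (m : ℕ) :
    laguerreCoeff α n k * Real.Gamma (α + k + 1 + m)
      = (-1) ^ (n - k) * n.choose k * poch (α + k + 1) m * Real.Gamma (α + n + 1) := by
  have hx : ∀ j : ℕ, α + k + 1 ≠ -j := fun j h => by
    linarith [(j.cast_nonneg : (0 : ℝ) ≤ j), (k.cast_nonneg : (0 : ℝ) ≤ k)]
  have hn : α + n + 1 = α + k + 1 + (n - k : ℕ) := by push_cast [hk]; ring
  rw [hn, Gamma_add_natCast_eq_poch_mul hx, Gamma_add_natCast_eq_poch_mul hx, laguerreCoeff,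
    show (k : ℝ) + 1 + α = α + k + 1 by ring]
  ring

lemma sum_laguerreCoeff_mul_Gamma {α : ℝ} (hα : -1 < α) (n b : ℕ) :
    ∑ k ∈ range (n + 1), laguerreCoeff α n k * Real.Gamma (α + k + 1 + b)
      = n ! * b.choose n * Real.Gamma (α + b + 1) := by
  rw [sum_congr rfl fun k hk => laguerreCoeff_mul_Gamma hα (mem_range_succ_iff.mp hk) b,
    ← sum_mul]
  simp_rw [add_right_comm α _ (1 : ℝ)]
  rw [sum_alternating_choose_mul_poch, Nat.descFactorial_eq_factorial_mul_choose]
  rcases le_or_gt n b with hnb | hbn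
  · have hx : ∀ j : ℕ, α + 1 + n ≠ -j := fun j h => by
      linarith [(j.cast_nonneg : (0 : ℝ) ≤ j), (n.cast_nonneg : (0 : ℝ) ≤ n)]
    rw [show α + 1 + b = α + 1 + n + (b - n : ℕ) by push_cast [hnb]; ring,
      Gamma_add_natCast_eq_poch_mul hx]
    push_cast
    ring
  · simp [Nat.choose_eq_zero_of_lt hbn]

lemma eqOn_rpow_mul_exp_neg_mul_sum (s : ℝ) (c : ℕ → ℝ) (m : ℕ) :
    Set.EqOn (fun x => x ^ s * Real.exp (-x) * ∑ k ∈ range m, c k * x ^ k)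
      (fun x => ∑ k ∈ range m, c k * (Real.exp (-x) * x ^ (s + k + 1 - 1))) (Set.Ioi 0) := by
  intro x hx
  simp only [mul_sum]
  refine sum_congr rfl fun k _ => ?_
  rw [add_sub_cancel_right, Real.rpow_add hx, Real.rpow_natCast]
  ring

lemma integrableOn_rpow_mul_exp_neg_mul_sum {s : ℝ} (hs : -1 < s) (c : ℕ → ℝ) (m : ℕ) :
    IntegrableOn (fun x => x ^ s * Real.exp (-x) * ∑ k ∈ range m, c k * x ^ k) (Set.Ioi 0) := by
  have hsk : ∀ k : ℕ, 0 < s + k + 1 := fun k => by linarith [(k.cast_nonneg : (0 : ℝ) ≤ k)]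
  refine IntegrableOn.congr_fun ?_ (eqOn_rpow_mul_exp_neg_mul_sum s c m).symm measurableSet_Ioi
  exact integrable_finsetSum _ fun k _ => (Real.GammaIntegral_convergent (hsk k)).const_mul (c k)

lemma integral_rpow_mul_exp_neg_mul_sum {s : ℝ} (hs : -1 < s) (c : ℕ → ℝ) (m : ℕ) :
    ∫ x in Set.Ioi 0, x ^ s * Real.exp (-x) * ∑ k ∈ range m, c k * x ^ k
      = ∑ k ∈ range m, c k * Real.Gamma (s + k + 1) := by
  have hsk : ∀ k : ℕ, 0 < s + k + 1 := fun k => by linarith [(k.cast_nonneg : (0 : ℝ) ≤ k)]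
  rw [setIntegral_congr_fun measurableSet_Ioi (eqOn_rpow_mul_exp_neg_mul_sum s c m),
    integral_finsetSum _ fun k _ => (Real.GammaIntegral_convergent (hsk k)).const_mul (c k)]
  exact sum_congr rfl fun k _ => by rw [integral_const_mul, Real.Gamma_eq_integral (hsk k)]

lemma integrableOn_rpow_mul_exp_neg_mul_laguerreMonic {α : ℝ} (hα : -1 < α) (n b : ℕ) :
    IntegrableOn (fun x => x ^ ((b : ℝ) + α) * Real.exp (-x) * laguerreMonic α n x)
      (Set.Ioi 0) := by
  simp_rw [laguerreMonic_eq_sum]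
  exact integrableOn_rpow_mul_exp_neg_mul_sum (by linarith [(b.cast_nonneg : (0 : ℝ) ≤ b)]) _ _

lemma integral_rpow_mul_exp_neg_mul_laguerreMonic {α : ℝ} (hα : -1 < α) (n b : ℕ) :
    ∫ x in Set.Ioi 0, x ^ ((b : ℝ) + α) * Real.exp (-x) * laguerreMonic α n x
      = n ! * b.choose n * Real.Gamma (α + b + 1) := by
  simp_rw [laguerreMonic_eq_sum]
  rw [integral_rpow_mul_exp_neg_mul_sum (by linarith [(b.cast_nonneg : (0 : ℝ) ≤ b)]),
    ← sum_laguerreCoeff_mul_Gamma hα]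
  exact sum_congr rfl fun k _ => by ring_nf

lemma integral_rpow_mul_exp_neg_mul_laguerreMonic_sq {α : ℝ} (hα : -1 < α) (n ℓ : ℕ) :
    ∫ x in Set.Ioi 0, x ^ ((ℓ : ℝ) + α) * Real.exp (-x) * laguerreMonic α n x ^ 2
      = ∑ k ∈ range (n + 1),
          laguerreCoeff α n k * (n ! * (ℓ + k).choose n * Real.Gamma (α + (ℓ + k : ℕ) + 1)) := by
  have expand : Set.EqOn (fun x => x ^ ((ℓ : ℝ) + α) * Real.exp (-x) * laguerreMonic α n x ^ 2)
      (fun x => ∑ k ∈ range (n + 1), laguerreCoeff α n k *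
        (x ^ (((ℓ + k : ℕ) : ℝ) + α) * Real.exp (-x) * laguerreMonic α n x)) (Set.Ioi 0) := by
    intro x hx
    dsimp only
    conv_lhs => rw [sq, ← mul_assoc]; arg 2; rw [laguerreMonic_eq_sum]
    rw [mul_sum]
    refine sum_congr rfl fun k _ => ?_
    rw [Nat.cast_add, add_right_comm, Real.rpow_add hx (ℓ + α), Real.rpow_natCast]
    ring
  rw [setIntegral_congr_fun measurableSet_Ioi expand, integral_finsetSum _ fun k _ =>
    (integrableOn_rpow_mul_exp_neg_mul_laguerreMonic hα n (ℓ + k)).const_mul _]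
  exact sum_congr rfl fun k _ => by
    rw [integral_const_mul, integral_rpow_mul_exp_neg_mul_laguerreMonic hα]

lemma normalized_integral_laguerreMonic_sq {α : ℝ} (hα : -1 < α) (n ℓ : ℕ) :
    1 / ((n ! : ℝ) * Real.Gamma (α + n + 1)) *
        ∫ x in Set.Ioi 0, x ^ ((ℓ : ℝ) + α) * Real.exp (-x) * laguerreMonic α n x ^ 2
      = ∑ i ∈ range (n + 1),
          ((n.choose i * (n + ℓ - i).choose n : ℕ) : ℝ) * ((-1) ^ i * poch (n + α - i + 1) ℓ) := by
  rw [integral_rpow_mul_exp_neg_mul_laguerreMonic_sq hα, mul_sum, ← sum_range_reflect]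
  refine sum_congr rfl fun i hi => ?_
  obtain ⟨k, rfl⟩ := Nat.exists_eq_add_of_le (mem_range_succ_iff.mp hi)
  have hc := laguerreCoeff_mul_Gamma hα (Nat.le_add_left k i) ℓ
  rw [Nat.add_sub_cancel, ← Nat.choose_symm_add] at hc
  have hΓ : Real.Gamma (α + (i + k : ℕ) + 1) ≠ 0 :=
    (Real.Gamma_pos_of_pos (by linarith [((i + k).cast_nonneg : (0 : ℝ) ≤ (i + k : ℕ))])).ne'
  rw [show i + k + 1 - 1 - i = k by omega, show i + k + ℓ - i = ℓ + k by omega,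
    show α + ((ℓ + k : ℕ) : ℝ) + 1 = α + k + 1 + ℓ by push_cast; ring,
    show ((i + k : ℕ) : ℝ) + α - i + 1 = α + k + 1 by push_cast; ring]
  field_simp
  push_cast at hc ⊢
  linear_combination ((ℓ + k).choose (i + k) : ℝ) * hc

lemma A_succ_eq_sum_choose (N M : ℝ) (L : ℕ) :
    A N M (L + 1) = ((L + 1) ! : ℝ)⁻¹ * ∑ j ∈ range (L + 1),
      (L.choose j : ℝ) * ((-1) ^ j * poch (N - j) (L + 1) * poch (M - j) (L + 1)) := by
  rw [A, mul_sum, mul_sum]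
  refine sum_congr rfl fun j hj => ?_
  rw [Nat.cast_choose ℝ (mem_range_succ_iff.mp hj), Nat.factorial_succ]
  push_cast
  field_simp

lemma A_add_one_sub (N M : ℝ) (ℓ : ℕ) :
    A (N + 1) (M + 1) ℓ - A N M ℓ = (ℓ ! : ℝ)⁻¹ * ∑ i ∈ range (ℓ + 1),
      (ℓ.choose i : ℝ) * ((-1) ^ i * poch (N - i + 1) ℓ * poch (M - i + 1) ℓ) := by
  rcases ℓ with _ | L
  · simp [A, poch]
  rw [A_succ_eq_sum_choose, A_succ_eq_sum_choose, ← mul_sub,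
    sum_choose_succ_mul fun i _ => (-1) ^ i * poch (N - i + 1) (L + 1) * poch (M - i + 1) (L + 1),
    sub_eq_add_neg, ← sum_neg_distrib]
  congr 2 <;> refine sum_congr rfl fun j _ => ?_ <;> push_cast <;> ring_nf

lemma A_zero_left (M : ℝ) (ℓ : ℕ) : A 0 M ℓ = 0 := by
  rcases ℓ with _ | L
  · rfl
  rw [A_succ_eq_sum_choose]
  refine mul_eq_zero_of_right _ (sum_eq_zero fun j hj => ?_)
  rw [zero_sub, poch_neg_natCast_of_lt (mem_range.mp hj)]
  simp

lemma normalized_integral_laguerreMonic_sq_eq_A_sub {α : ℝ} (hα : -1 < α) (n ℓ : ℕ) :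
    1 / ((n ! : ℝ) * Real.Gamma (α + n + 1)) *
        ∫ x in Set.Ioi 0, x ^ ((ℓ : ℝ) + α) * Real.exp (-x) * laguerreMonic α n x ^ 2
      = A ((n + 1 : ℕ) : ℝ) ((n + 1 : ℕ) + α) ℓ - A n (n + α) ℓ := by
  rw [normalized_integral_laguerreMonic_sq hα, sum_choose_mul_choose_add_sub_comm, Nat.cast_succ,
    add_right_comm (n : ℝ) 1 α, A_add_one_sub, mul_sum]
  refine sum_congr rfl fun i hi => ?_
  rw [poch_natCast_sub_add_one (mem_range_succ_iff.mp hi), add_comm ℓ n]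
  push_cast
  field_simp

theorem LUE_one_point_correlator_general (α : ℝ) (hα : -1 < α) (N : ℕ)
    (ℓ : ℕ) :
    ∑ n ∈ range N,
      (1 / ((n.factorial : ℝ) * Real.Gamma (α + n + 1))) *
        ∫ x in Set.Ioi (0 : ℝ),
          x ^ ((ℓ : ℝ) + α) * Real.exp (-x) * (laguerreMonic α n x) ^ 2
    = A (N : ℝ) ((N : ℝ) + α) ℓ := by
  rw [sum_congr rfl fun n _ => normalized_integral_laguerreMonic_sq_eq_A_sub hα n ℓ,
    sum_range_sub (fun n : ℕ => A n (n + α) ℓ)]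
  simp [A_zero_left]

/-- LUE one-point correlator: `⟨tr X^ℓ⟩ = A_ℓ(N, N+α)`, written in terms of
monic generalized Laguerre polynomials. -/
theorem LUE_one_point_correlator (α : ℝ) (hα : -1 < α) (N : ℕ) (hN : 0 < N)
    (ℓ : ℕ) (hℓ : 1 ≤ ℓ) :
    ∑ n ∈ range N,
      (1 / ((n.factorial : ℝ) * Real.Gamma (α + n + 1))) *
        ∫ x in Set.Ioi (0 : ℝ),
          x ^ ((ℓ : ℝ) + α) * Real.exp (-x) * (laguerreMonic α n x) ^ 2
    = A (N : ℝ) ((N : ℝ) + α) ℓ :=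
  LUE_one_point_correlator_general α hα N ℓ
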